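/- arXiv:math-ph/9807005 — 4 statements merged into one kernel-verified Lean document; each statement's English description precedes it below -/
import Mathlib

section
/- If F is a real 2n×2n symplectic matrix with n×n block decomposition F = [[A, B],[C, D]], then the complex n×n matrix U = A + iB is invertible. -/
open Matrix

noncomputable section

/-- The standard symplectic matrix J = [[0, I], [-I, 0]]. -/
def J (n : ℕ) : Matrix (Fin n ⊕ Fin n) (Fin n ⊕ Fin n) ℝ :=
  Matrix.fromBlocks 0 1 (-1) 0

/-!
If `U z = 0` with `z = x + i y`, then `F` maps `p = (x, -y)` and `q = (y, x)` into the Lagrangian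
subspace `0 ⊕ ℝⁿ`, on which the symplectic form `ω(v, w) = v ⬝ᵥ J w` vanishes. As `F` preserves
`ω`, this gives `0 = ω(p, q) = |x|² + |y|²`, so `z = 0`.
-/

theorem dotProduct_mulVec_mulVec_eq_of_transpose_mul_mul_eq {ι R : Type*} [Fintype ι]
    [CommSemiring R] {M F : Matrix ι ι R} (hF : Fᵀ * M * F = M) (v w : ι → R) :
    (F *ᵥ v) ⬝ᵥ (M *ᵥ (F *ᵥ w)) = v ⬝ᵥ (M *ᵥ w) := by
  conv_rhs => rw [← hF]
  rw [← mulVec_mulVec, ← mulVec_mulVec, dotProduct_mulVec v, vecMul_transpose]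

theorem dotProduct_J_mulVec {n : ℕ} (v w : Fin n ⊕ Fin n → ℝ) :
    v ⬝ᵥ (J n *ᵥ w) = (v ∘ Sum.inl) ⬝ᵥ (w ∘ Sum.inr) - (v ∘ Sum.inr) ⬝ᵥ (w ∘ Sum.inl) := by
  simp [_root_.J, fromBlocks_mulVec, neg_mulVec, dotProduct, Fintype.sum_sum_type, sub_eq_add_neg]

theorem dotProduct_J_mulVec_eq_zero_of_symplectic {n : ℕ}
    {F : Matrix (Fin n ⊕ Fin n) (Fin n ⊕ Fin n) ℝ} (hF : Fᵀ * J n * F = J n)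
    {v w : Fin n ⊕ Fin n → ℝ} (hv : (F *ᵥ v) ∘ Sum.inl = 0) (hw : (F *ᵥ w) ∘ Sum.inl = 0) :
    v ⬝ᵥ (J n *ᵥ w) = 0 := by
  rw [← dotProduct_mulVec_mulVec_eq_of_transpose_mul_mul_eq hF, dotProduct_J_mulVec, hv, hw,
    zero_dotProduct, dotProduct_zero, sub_zero]

theorem mulVec_sum_elim_comp_inl {l m n o α : Type*} [Fintype l] [Fintype m]
    [NonUnitalNonAssocSemiring α] (F : Matrix (n ⊕ o) (l ⊕ m) α) (x : l → α) (y : m → α) :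
    (F *ᵥ Sum.elim x y) ∘ Sum.inl = F.toBlocks₁₁ *ᵥ x + F.toBlocks₁₂ *ᵥ y := by
  conv_lhs => rw [← fromBlocks_toBlocks F]
  rw [fromBlocks_mulVec, Sum.elim_comp_inl, Sum.elim_comp_inl, Sum.elim_comp_inr]

section Complexify

variable {m ι : Type*} [Fintype ι] (A B : Matrix m ι ℝ) (z : ι → ℂ)

theorem re_comp_map_add_I_smul_map_mulVec :
    Complex.re ∘ ((A.map Complex.ofReal + Complex.I • B.map Complex.ofReal) *ᵥ z) =
      A *ᵥ (Complex.re ∘ z) - B *ᵥ (Complex.im ∘ z) := by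
  ext i
  simp [mulVec, dotProduct, Complex.re_sum, add_mul, ← sub_eq_add_neg, Finset.sum_sub_distrib]

theorem im_comp_map_add_I_smul_map_mulVec :
    Complex.im ∘ ((A.map Complex.ofReal + Complex.I • B.map Complex.ofReal) *ᵥ z) =
      A *ᵥ (Complex.im ∘ z) + B *ᵥ (Complex.re ∘ z) := by
  ext i
  simp [mulVec, dotProduct, Complex.im_sum, Finset.sum_add_distrib, add_mul]

end Complexify

/-- If F is a real 2n×2n symplectic matrix with block decomposition
F = [[A,B],[C,D]], then U = A + iB is invertible over ℂ. -/
theorem stmt_0 (n : ℕ) (F : Matrix (Fin n ⊕ Fin n) (Fin n ⊕ Fin n) ℝ)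
    (hF : Fᵀ * J n * F = J n) :
    IsUnit ((F.toBlocks₁₁).map (Complex.ofReal) +
      Complex.I • (F.toBlocks₁₂).map (Complex.ofReal)) := by
  rw [isUnit_iff_isUnit_det, isUnit_iff_ne_zero, Ne, ← exists_mulVec_eq_zero_iff]
  rintro ⟨z, hz0, hz⟩
  set x := Complex.re ∘ z
  set y := Complex.im ∘ z
  have hp : (F *ᵥ Sum.elim x (-y)) ∘ Sum.inl = 0 := by
    rw [mulVec_sum_elim_comp_inl, mulVec_neg, ← sub_eq_add_neg,
      ← re_comp_map_add_I_smul_map_mulVec, hz]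
    rfl
  have hq : (F *ᵥ Sum.elim y x) ∘ Sum.inl = 0 := by
    rw [mulVec_sum_elim_comp_inl, ← im_comp_map_add_I_smul_map_mulVec, hz]
    rfl
  have hω := dotProduct_J_mulVec_eq_zero_of_symplectic hF hp hq
  rw [dotProduct_J_mulVec] at hω
  simp only [Sum.elim_comp_inl, Sum.elim_comp_inr, neg_dotProduct, sub_neg_eq_add] at hω
  have hsq (v : Fin n → ℝ) : 0 ≤ v ⬝ᵥ v := Fintype.sum_nonneg fun i => mul_self_nonneg (v i)
  obtain ⟨hx, hy⟩ := (add_eq_zero_iff_of_nonneg (hsq x) (hsq y)).mp hω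
  rw [dotProduct_self_eq_zero] at hx hy
  exact hz0 (funext fun i => Complex.ext (congrFun hx i) (congrFun hy i))
end
end

section
/- If F = [[A,B],[C,D]] is a real symplectic 2n×2n matrix and M = (C + iD)(A + iB)⁻¹, then Im M = ᵗ((A+iB)⁻¹)* (A+iB)⁻¹ in the sense that for all real vectors v, v·(Im M)v = |(A + iB)⁻¹ v|², and in particular Im M is positive definite. -/
open Matrix

noncomputable section

/-- If F = [[A,B],[C,D]] is real symplectic and M = (C + iD)(A + iB)⁻¹, then
Im M is positive definite; concretely, for every real vector v,
v·(Im M)v = |(A + iB)⁻¹ v|². -/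
theorem stmt_4 (n : ℕ) (F : Matrix (Fin n ⊕ Fin n) (Fin n ⊕ Fin n) ℝ)
    (hF : Fᵀ * J n * F = J n)
    (A B C D U M : Matrix (Fin n) (Fin n) ℂ)
    (hA : A = (F.toBlocks₁₁).map Complex.ofReal)
    (hB : B = (F.toBlocks₁₂).map Complex.ofReal)
    (hC : C = (F.toBlocks₂₁).map Complex.ofReal)
    (hD : D = (F.toBlocks₂₂).map Complex.ofReal)
    (hU : U = A + Complex.I • B) (hUinv : IsUnit U)
    (hM : M = (C + Complex.I • D) * U⁻¹)
    (ImM : Matrix (Fin n) (Fin n) ℝ)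
    (hImM : ∀ i j, ImM i j = (M i j).im) :
    (∀ v : Fin n → ℝ,
      v ⬝ᵥ ImM.mulVec v =
        ∑ i, ‖(U⁻¹).mulVec (fun j => (v j : ℂ)) i‖ ^ 2) ∧
    ImM.PosDef := by
  -- block identities over ℝ
  set A₀ := F.toBlocks₁₁
  set B₀ := F.toBlocks₁₂
  set C₀ := F.toBlocks₂₁
  set D₀ := F.toBlocks₂₂
  have hFb : F = fromBlocks A₀ B₀ C₀ D₀ := (fromBlocks_toBlocks F).symm
  rw [hFb] at hF
  simp only [_root_.J, fromBlocks_transpose, fromBlocks_multiply, Matrix.mul_zero,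
    Matrix.mul_one, Matrix.mul_neg, zero_add, add_zero, Matrix.zero_mul, Matrix.neg_mul,
    Matrix.one_mul] at hF
  have e12 := congrArg Matrix.toBlocks₁₂ hF
  have e21 := congrArg Matrix.toBlocks₂₁ hF
  have e11 := congrArg Matrix.toBlocks₁₁ hF
  have e22 := congrArg Matrix.toBlocks₂₂ hF
  simp only [toBlocks_fromBlocks₁₁, toBlocks_fromBlocks₁₂, toBlocks_fromBlocks₂₁,
    toBlocks_fromBlocks₂₂] at e11 e12 e21 e22
  rw [neg_add_eq_sub, sub_eq_zero] at e11 e22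
  rw [neg_add_eq_sub] at e12 e21
  have e21' : D₀ᵀ * A₀ - B₀ᵀ * C₀ = 1 := by rw [← neg_sub, e21, neg_neg]
  -- complexification
  have hmap : ∀ P Q : Matrix (Fin n) (Fin n) ℝ, P = Q →
      P.map Complex.ofReal = Q.map Complex.ofReal := fun P Q h => by rw [h]
  have hmul : ∀ P Q : Matrix (Fin n) (Fin n) ℝ,
      (P * Q).map Complex.ofReal = P.map Complex.ofReal * Q.map Complex.ofReal := by
    intro P Q
    exact Matrix.map_mul (f := Complex.ofRealHom)
  have hone : (1 : Matrix (Fin n) (Fin n) ℝ).map Complex.ofReal = 1 :=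
    Matrix.map_one _ Complex.ofReal_zero Complex.ofReal_one
  have htr : ∀ P : Matrix (Fin n) (Fin n) ℝ,
      (Pᵀ).map Complex.ofReal = (P.map Complex.ofReal)ᵀ := fun P => Matrix.transpose_map
  have hsub : ∀ P Q : Matrix (Fin n) (Fin n) ℝ,
      (P - Q).map Complex.ofReal = P.map Complex.ofReal - Q.map Complex.ofReal := by
    intro P Q; ext i j; simp
  have m1 : Aᵀ * C = Cᵀ * A := by
    have := hmap _ _ e11
    rw [hmul, hmul, htr, htr, ← hA, ← hC] at this
    exact this
  have m2 : Bᵀ * D = Dᵀ * B := by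
    have := hmap _ _ e22
    rw [hmul, hmul, htr, htr, ← hB, ← hD] at this
    exact this
  have m3 : Aᵀ * D - Cᵀ * B = 1 := by
    have := hmap _ _ e12
    rw [hsub, hmul, hmul, htr, htr, hone, ← hA, ← hB, ← hC, ← hD] at this
    exact this
  have m4 : Dᵀ * A - Bᵀ * C = 1 := by
    have := hmap _ _ e21'
    rw [hsub, hmul, hmul, htr, htr, hone, ← hA, ← hB, ← hC, ← hD] at this
    exact this
  -- conjugates
  set W : Matrix (Fin n) (Fin n) ℂ := C + Complex.I • D with hW
  have hconjR : ∀ P : Matrix (Fin n) (Fin n) ℝ,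
      (P.map Complex.ofReal).map (starRingEnd ℂ) = P.map Complex.ofReal := by
    intro P; ext i j; simp [Matrix.map_apply, Complex.conj_ofReal]
  have hUc : U.map (starRingEnd ℂ) = A - Complex.I • B := by
    rw [hU]; ext i j
    simp only [Matrix.map_apply, Matrix.add_apply, Matrix.sub_apply, Matrix.smul_apply,
      smul_eq_mul, map_add, _root_.map_mul, Complex.conj_I, hA, hB, Matrix.map_apply,
      Complex.conj_ofReal, neg_mul]
    ring
  have hWc : W.map (starRingEnd ℂ) = C - Complex.I • D := by
    rw [hW]; ext i j
    simp only [Matrix.map_apply, Matrix.add_apply, Matrix.sub_apply, Matrix.smul_apply,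
      smul_eq_mul, map_add, _root_.map_mul, Complex.conj_I, hC, hD, Matrix.map_apply,
      Complex.conj_ofReal, neg_mul]
    ring
  -- key identities
  have key : Uᵀ * (W.map (starRingEnd ℂ)) - Wᵀ * (U.map (starRingEnd ℂ)) =
      (-(2:ℂ) * Complex.I) • (1 : Matrix (Fin n) (Fin n) ℂ) := by
    rw [hUc, hWc, hU, hW]
    simp only [transpose_add, transpose_smul, add_mul, mul_sub, sub_mul, smul_mul_assoc,
      mul_smul_comm, smul_smul, Complex.I_mul_I, neg_smul, one_smul, smul_sub, neg_mul]
    linear_combination (norm := (match_scalars <;> (try ring_nf) <;> (try simp [Complex.I_sq]) <;> try ring1)) m1 + m2 - Complex.I • m3 - Complex.I • m4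
  have hWU : Wᵀ * U = Uᵀ * W := by
    rw [hU, hW]
    simp only [transpose_add, transpose_smul, add_mul, mul_add, smul_mul_assoc,
      mul_smul_comm, smul_smul, Complex.I_mul_I, neg_smul, one_smul, neg_mul]
    linear_combination (norm := (match_scalars <;> (try ring_nf) <;> (try simp [Complex.I_sq]) <;> try ring1)) -m1 + m2 - Complex.I • m3 + Complex.I • m4
  -- invertibility facts
  have hdet : IsUnit U.det := (Matrix.isUnit_iff_isUnit_det U).mp hUinv
  have hUU : U * U⁻¹ = 1 := Matrix.mul_nonsing_inv U hdet
  have hUU' : U⁻¹ * U = 1 := Matrix.nonsing_inv_mul U hdet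
  -- symmetry of M
  have hMsymm : Mᵀ = M := by
    have h1 : Wᵀ = Uᵀ * M := by
      calc Wᵀ = Wᵀ * (U * U⁻¹) := by rw [hUU, Matrix.mul_one]
        _ = (Wᵀ * U) * U⁻¹ := by rw [Matrix.mul_assoc]
        _ = Uᵀ * (W * U⁻¹) := by rw [hWU, Matrix.mul_assoc]
        _ = Uᵀ * M := by rw [hM]
    have hdetT : IsUnit Uᵀ.det := by rwa [Matrix.det_transpose]
    have hUUT : Uᵀ⁻¹ * Uᵀ = 1 := Matrix.nonsing_inv_mul _ hdetT
    calc Mᵀ = (W * U⁻¹)ᵀ := by rw [hM]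
      _ = U⁻¹ᵀ * Wᵀ := by rw [Matrix.transpose_mul]
      _ = Uᵀ⁻¹ * (Uᵀ * M) := by rw [Matrix.transpose_nonsing_inv, h1]
      _ = (Uᵀ⁻¹ * Uᵀ) * M := by rw [Matrix.mul_assoc]
      _ = M := by rw [hUUT, Matrix.one_mul]
  -- the scalar dot-product auxiliary
  have dotaux : ∀ (P : Matrix (Fin n) (Fin n) ℂ) (x y : Fin n → ℂ),
      (P *ᵥ x) ⬝ᵥ y = x ⬝ᵥ (Pᵀ *ᵥ y) := by
    intro P x y
    rw [← Matrix.vecMul_transpose, ← Matrix.dotProduct_mulVec]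
  -- main quadratic form computation
  have main : ∀ v : Fin n → ℝ,
      v ⬝ᵥ ImM.mulVec v =
        ∑ i, ‖(U⁻¹).mulVec (fun j => (v j : ℂ)) i‖ ^ 2 := by
    intro v
    set vc : Fin n → ℂ := fun j => (v j : ℂ) with hvc
    set w : Fin n → ℂ := U⁻¹ *ᵥ vc with hw
    set sw : Fin n → ℂ := fun i => (starRingEnd ℂ) (w i) with hsw
    have h1 : U *ᵥ w = vc := by
      rw [hw, Matrix.mulVec_mulVec, hUU, Matrix.one_mulVec]
    have h2 : (U.map (starRingEnd ℂ)) *ᵥ sw = vc := by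
      ext i
      have := congrArg (starRingEnd ℂ) (congrFun h1 i)
      simpa [Matrix.mulVec, dotProduct, map_sum, Matrix.map_apply, hvc,
        Complex.conj_ofReal] using this
    set s : ℂ := vc ⬝ᵥ (M *ᵥ vc) with hs
    have hsW : s = vc ⬝ᵥ (W *ᵥ w) := by
      rw [hs, hM, ← Matrix.mulVec_mulVec, ← hw]
    have hconjs : (starRingEnd ℂ) s = vc ⬝ᵥ ((W.map (starRingEnd ℂ)) *ᵥ sw) := by
      rw [hsW]
      simp [dotProduct, Matrix.mulVec, map_sum, Matrix.map_apply, hvc,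
        Complex.conj_ofReal, hsw, Finset.mul_sum, _root_.map_mul]
    have hs1 : s = w ⬝ᵥ ((Wᵀ * (U.map (starRingEnd ℂ))) *ᵥ sw) :=
      calc s = vc ⬝ᵥ (W *ᵥ w) := hsW
        _ = (W *ᵥ w) ⬝ᵥ vc := dotProduct_comm _ _
        _ = (W *ᵥ w) ⬝ᵥ ((U.map (starRingEnd ℂ)) *ᵥ sw) := by rw [h2]
        _ = w ⬝ᵥ (Wᵀ *ᵥ ((U.map (starRingEnd ℂ)) *ᵥ sw)) := dotaux _ _ _
        _ = w ⬝ᵥ ((Wᵀ * (U.map (starRingEnd ℂ))) *ᵥ sw) := by rw [Matrix.mulVec_mulVec]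
    have hs2 : (starRingEnd ℂ) s = w ⬝ᵥ ((Uᵀ * (W.map (starRingEnd ℂ))) *ᵥ sw) :=
      calc (starRingEnd ℂ) s = vc ⬝ᵥ ((W.map (starRingEnd ℂ)) *ᵥ sw) := hconjs
        _ = (U *ᵥ w) ⬝ᵥ ((W.map (starRingEnd ℂ)) *ᵥ sw) := by rw [h1]
        _ = w ⬝ᵥ (Uᵀ *ᵥ ((W.map (starRingEnd ℂ)) *ᵥ sw)) := dotaux _ _ _
        _ = w ⬝ᵥ ((Uᵀ * (W.map (starRingEnd ℂ))) *ᵥ sw) := by rw [Matrix.mulVec_mulVec]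
    have hdiff : (starRingEnd ℂ) s - s =
        (-(2:ℂ) * Complex.I) * (w ⬝ᵥ sw) := by
      rw [hs2, hs1, ← dotProduct_sub, ← Matrix.sub_mulVec, key]
      simp [Matrix.smul_mulVec, Matrix.one_mulVec, dotProduct_smul,
        Matrix.neg_mulVec, dotProduct_neg, smul_eq_mul, mul_assoc]
    have hwsw : w ⬝ᵥ sw = ((∑ i, ‖w i‖ ^ 2 : ℝ) : ℂ) := by
      rw [dotProduct, Complex.ofReal_sum]
      refine Finset.sum_congr rfl fun i _ => ?_
      show w i * (starRingEnd ℂ) (w i) = _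
      rw [Complex.mul_conj]
      norm_cast
      rw [Complex.sq_norm]
    have him : (s.im : ℂ) = ((∑ i, ‖w i‖ ^ 2 : ℝ) : ℂ) := by
      have hsc := Complex.sub_conj s
      have : ((2 : ℂ) * Complex.I) * (s.im : ℂ) = ((2:ℂ) * Complex.I) * ((∑ i, ‖w i‖ ^ 2 : ℝ) : ℂ) := by
        rw [← hwsw]
        have := hdiff
        push_cast at hsc
        linear_combination -this - hsc
      exact mul_left_cancel₀ (by simp [Complex.I_ne_zero]) this
    have him' : s.im = ∑ i, ‖w i‖ ^ 2 := by exact_mod_cast him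
    have lhs_eq : v ⬝ᵥ ImM.mulVec v = ∑ i, ∑ j, v i * ((M i j).im * v j) := by
      simp [dotProduct, Matrix.mulVec, Finset.mul_sum, hImM]
    have rhs_eq : s.im = ∑ i, ∑ j, v i * ((M i j).im * v j) := by
      rw [hs]
      simp only [dotProduct, Matrix.mulVec, Complex.im_sum, Finset.mul_sum]
      refine Finset.sum_congr rfl fun i _ => Finset.sum_congr rfl fun j _ => ?_
      simp [hvc, Complex.mul_im, Complex.ofReal_re, Complex.ofReal_im]
      try ring
    rw [lhs_eq, ← rhs_eq, him']
  refine ⟨main, ?_, ?_⟩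
  · -- IsHermitian
    ext i j
    have hsym := congrFun (congrFun hMsymm i) j
    simp only [Matrix.transpose_apply] at hsym
    simp only [Matrix.conjTranspose_apply, hImM, star_trivial, hsym]
  · intro x hx
    have hx' : (x : Fin n → ℝ) ⬝ᵥ ImM.mulVec x = ∑ i, ‖(U⁻¹).mulVec (fun j => (x j : ℂ)) i‖ ^ 2 := main x
    have hwne : (U⁻¹ *ᵥ (fun j => (x j : ℂ))) ≠ 0 := by
      intro h0
      apply hx
      have : (fun j => (x j : ℂ)) = 0 := by
        have := congrArg (U *ᵥ ·) h0
        simpa [Matrix.mulVec_mulVec, hUU, Matrix.one_mulVec, Matrix.mulVec_zero] using this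
      ext j
      simpa using congrFun this j
    obtain ⟨i, hi⟩ : ∃ i, (U⁻¹ *ᵥ (fun j => (x j : ℂ))) i ≠ 0 := by
      by_contra h
      push_neg at h
      exact hwne (funext h)
    have : 0 < ∑ i, ‖(U⁻¹).mulVec (fun j => (x j : ℂ)) i‖ ^ 2 := by
      apply Finset.sum_pos' (fun i _ => sq_nonneg _)
      exact ⟨i, Finset.mem_univ i, pow_pos (norm_pos_iff.mpr hi) 2⟩
    have hsum : (x.sum fun i xi => x.sum fun j xj => star xi * ImM i j * xj) =
        (x : Fin n → ℝ) ⬝ᵥ ImM.mulVec x := by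
      simp [dotProduct, mulVec, Finsupp.sum_fintype, Finset.mul_sum, mul_assoc]
    rw [hsum, hx']
    exact this
end
end

section
/- Let F be a real symplectic 2n×2n matrix with 1 as an eigenvalue of algebraic multiplicity exactly 2, E₁ its generalized eigenspace for eigenvalue 1, and V the σ-orthogonal complement of E₁. Then ℝ^{2n} = E₁ ⊕ V and the restriction P of F to V does not have 1 as an eigenvalue. -/
/-!
Write `g = F - 1`. Since `F` preserves `σ`, one has `σ (F x) (g y) = -σ (g x) y`, hence
`σ (Fᵏ x) (gᵏ y) = (-1)ᵏ σ (gᵏ x) y`. As `F` is injective (σ is nondegenerate) and commutes with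
`g`, this makes `range gᵏ` σ-orthogonal to `ker gᵏ`, and by dimension count it is the whole
σ-orthogonal complement. Hence `V = range g²ⁿ`, and the Fitting decomposition
`ker g²ⁿ ⊕ range g²ⁿ` is `E₁ ⊕ V`. A fixed vector of `F` lies in `ker g ⊆ E₁`, so in `V` it is `0`.
-/

open Matrix

noncomputable section

theorem Module.End.isCompl_ker_pow_finrank_range_pow_finrank {K V : Type*} [Field K]
    [AddCommGroup V] [Module K V] [FiniteDimensional K V] (g : Module.End K V) :
    IsCompl (LinearMap.ker (g ^ Module.finrank K V))
      (LinearMap.range (g ^ Module.finrank K V)) := by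
  set d := Module.finrank K V
  refine (Submodule.isCompl_iff_disjoint _ _ ?_).mpr <| Submodule.disjoint_def.mpr ?_
  · rw [add_comm, LinearMap.finrank_range_add_finrank_ker]
  rintro _ hker ⟨w, rfl⟩
  have hw : w ∈ LinearMap.ker (g ^ (d + d)) := by
    rwa [LinearMap.mem_ker, pow_add, Module.End.mul_apply]
  rwa [Module.End.ker_pow_eq_ker_pow_finrank_of_le le_add_self] at hw

theorem LinearMap.SeparatingLeft.injective_of_isometry {R M : Type*} [CommRing R]
    [AddCommGroup M] [Module R M] {B : LinearMap.BilinForm R M} (hB : B.SeparatingLeft)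
    {f : Module.End R M} (hf : ∀ x y, B (f x) (f y) = B x y) : Function.Injective f := by
  refine (injective_iff_map_eq_zero f).mpr fun x hx => hB x fun y => ?_
  rw [← hf, hx, map_zero, LinearMap.zero_apply]

namespace LinearMap.BilinForm

section CommRing

variable {R M : Type*} [CommRing R] [AddCommGroup M] [Module R M] {B : LinearMap.BilinForm R M}
  {f : Module.End R M}

theorem apply_pow_apply_sub_one_pow (hf : ∀ x y, B (f x) (f y) = B x y) (k : ℕ) (x y : M) :
    B ((f ^ k) x) (((f - 1) ^ k) y) = (-1) ^ k * B (((f - 1) ^ k) x) y := by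
  have hstep : ∀ x y, B (f x) ((f - 1) y) = -B ((f - 1) x) y := fun x y => by
    simp only [LinearMap.sub_apply, Module.End.one_apply, map_sub, hf]
    ring
  induction k generalizing x y with
  | zero => simp
  | succ k ih =>
    have hcomm : (f - 1) * f ^ k = f ^ k * (f - 1) :=
      ((Commute.refl f).sub_left (Commute.one_left f)).pow_right k
    calc B ((f ^ (k + 1)) x) (((f - 1) ^ (k + 1)) y)
        = B (f ((f ^ k) x)) ((f - 1) (((f - 1) ^ k) y)) := by
          rw [pow_succ', pow_succ', Module.End.mul_apply, Module.End.mul_apply]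
      _ = -B ((f ^ k) ((f - 1) x)) (((f - 1) ^ k) y) := by
          rw [hstep, ← Module.End.mul_apply, hcomm, Module.End.mul_apply]
      _ = (-1) ^ (k + 1) * B (((f - 1) ^ (k + 1)) x) y := by
          rw [ih, pow_succ, pow_succ (f - 1), Module.End.mul_apply]
          ring

end CommRing

variable {K V : Type*} [Field K] [AddCommGroup V] [Module K V] [FiniteDimensional K V]
  {B : LinearMap.BilinForm K V} {f : Module.End K V}

theorem range_sub_one_pow_le_orthogonal_ker (hB : B.Nondegenerate)
    (hf : ∀ x y, B (f x) (f y) = B x y) (k : ℕ) :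
    LinearMap.range ((f - 1) ^ k) ≤ B.orthogonal (LinearMap.ker ((f - 1) ^ k)) := by
  rintro _ ⟨z, rfl⟩ u hu
  have hinj : Function.Injective (f ^ k) := by
    rw [Module.End.coe_pow]; exact (hB.1.injective_of_isometry hf).iterate k
  obtain ⟨u', rfl⟩ := (LinearMap.injective_iff_surjective.mp hinj) u
  have hu' : ((f - 1) ^ k) u' = 0 := by
    refine hinj ?_
    rw [map_zero, ← Module.End.mul_apply,
      (((Commute.refl f).sub_left (Commute.one_left f)).pow_pow k k).eq.symm]
    exact hu
  rw [apply_pow_apply_sub_one_pow hf, hu', map_zero, LinearMap.zero_apply, mul_zero]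

theorem orthogonal_ker_sub_one_pow (hB : B.Nondegenerate)
    (hf : ∀ x y, B (f x) (f y) = B x y) (k : ℕ) :
    B.orthogonal (LinearMap.ker ((f - 1) ^ k)) = LinearMap.range ((f - 1) ^ k) := by
  refine (Submodule.eq_of_le_of_finrank_le (range_sub_one_pow_le_orthogonal_ker hB hf k) ?_).symm
  have := LinearMap.finrank_range_add_finrank_ker ((f - 1) ^ k)
  rw [finrank_orthogonal hB]
  omega

end LinearMap.BilinForm

theorem Matrix.toBilin'_toLin'_apply_toLin'_apply {R ι : Type*} [CommRing R] [Fintype ι]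
    [DecidableEq ι] {M A : Matrix ι ι R} (hA : Aᵀ * M * A = M) (x y : ι → R) :
    M.toBilin' (A.toLin' x) (A.toLin' y) = M.toBilin' x y := by
  rw [← LinearMap.BilinForm.comp_apply, Matrix.toBilin'_comp, hA]

theorem nondegenerate_toBilin'_J (n : ℕ) : (Matrix.toBilin' (_root_.J n)).Nondegenerate := by
  have hJ : _root_.J n = -Matrix.J (Fin n) ℝ := by
    simp [_root_.J, Matrix.J, Matrix.fromBlocks_neg]
  refine LinearMap.BilinForm.nondegenerate_toBilin'_of_det_ne_zero' _ ?_
  rw [hJ, Matrix.det_neg]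
  exact mul_ne_zero (pow_ne_zero _ (by norm_num)) (Matrix.isUnit_det_J (Fin n) ℝ).ne_zero

theorem stmt_9_general (n : ℕ) (F : Matrix (Fin n ⊕ Fin n) (Fin n ⊕ Fin n) ℝ)
    (hF : Fᵀ * J n * F = J n)
    (E₁ V : Submodule ℝ (Fin n ⊕ Fin n → ℝ))
    (hE₁ : E₁ = LinearMap.ker
      (((Matrix.toLin' F - LinearMap.id : Module.End ℝ (Fin n ⊕ Fin n → ℝ)))
        ^ (2 * n)))
    (hV : V = (Matrix.toBilin' (J n)).orthogonal E₁) :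
    IsCompl E₁ V ∧
      ∀ v ∈ V, Matrix.toLin' F v = v → v = 0 := by
  have hrank : Module.finrank ℝ (Fin n ⊕ Fin n → ℝ) = 2 * n := by simp [two_mul]
  rw [← Module.End.one_eq_id, ← hrank] at hE₁
  have hcompl : IsCompl E₁ V := by
    rw [hV, hE₁, LinearMap.BilinForm.orthogonal_ker_sub_one_pow (nondegenerate_toBilin'_J n)
      (Matrix.toBilin'_toLin'_apply_toLin'_apply hF)]
    exact Module.End.isCompl_ker_pow_finrank_range_pow_finrank _
  refine ⟨hcompl, fun v hvV hFv => hcompl.disjoint.le_bot ⟨?_, hvV⟩⟩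
  rw [hE₁]
  exact Module.End.ker_pow_le_ker_pow_finrank _ 1 (by simp [hFv])

/-- Let F be real symplectic with 1 an eigenvalue of algebraic multiplicity
exactly 2, E₁ its generalized eigenspace for 1, and V the σ-orthogonal
complement of E₁.  Then ℝ^{2n} = E₁ ⊕ V and the restriction of F to V does
not have 1 as an eigenvalue. -/
theorem stmt_9 (n : ℕ) (F : Matrix (Fin n ⊕ Fin n) (Fin n ⊕ Fin n) ℝ)
    (hF : Fᵀ * J n * F = J n)
    (E₁ V : Submodule ℝ (Fin n ⊕ Fin n → ℝ))
    (hE₁ : E₁ = LinearMap.ker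
      (((Matrix.toLin' F - LinearMap.id : Module.End ℝ (Fin n ⊕ Fin n → ℝ)))
        ^ (2 * n)))
    (hdim : Module.finrank ℝ E₁ = 2)
    (hV : V = (Matrix.toBilin' (J n)).orthogonal E₁) :
    IsCompl E₁ V ∧
      ∀ v ∈ V, Matrix.toLin' F v = v → v = 0 :=
  stmt_9_general n F hF E₁ V hE₁ hV
end
end

section
/- Gaussian integral with positive-definite imaginary part: if M is a complex symmetric n×n matrix whose imaginary part Im M is positive definite, then ∫_{ℝⁿ} exp((i/2) x·Mx) dx = (2π)^{n/2} · (det(-iM))^{-1/2}, where the square root is determined by the branch continuous along the path M_s = sM + (1-s)iI, s ∈ [0,1], equal to the positive root at M = iI. -/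
/-!
With `A = Re M` and `B = Im M`, a real change of variables `x = P y` with `Pᵀ B P = 1` and
`Pᵀ A P` diagonal splits the integrand into one-dimensional Gaussians, so that
`(∫ exp((i/2) xᵀ M x) dx)² · det(-iM) = (2π)ⁿ` for every such `M`. Every `M_s` on the path
qualifies, and by dominated convergence (convexity of `exp` bounds the integrand at `M_s` by the sum
of the integrands at `M₀ = iI` and `M₁ = M`) the integral depends continuously on `s`. Hence
`s ↦ (∫ ...) · r s` is a continuous square root of `(2π)ⁿ` on `[0, 1]`; it equals `(2π)^{n/2}`
at `s = 0`, so also at `s = 1`.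
-/

open Matrix MeasureTheory Complex Set
open scoped Real

variable {ι : Type*}

section ChangeOfVariables

variable [Fintype ι] [DecidableEq ι] {P : Matrix ι ι ℝ}

theorem map_mulVec_volume (hP : P.det ≠ 0) :
    Measure.map (P *ᵥ ·) (volume : Measure (ι → ℝ)) = ENNReal.ofReal |P.det|⁻¹ • volume := by
  have h := Measure.map_linearMap_addHaar_eq_smul_addHaar (volume : Measure (ι → ℝ))
    (f := Matrix.toLin' P) (by rwa [LinearMap.det_toLin'])
  rwa [LinearMap.det_toLin', abs_inv] at h

theorem measurableEmbedding_mulVec (hP : P.det ≠ 0) :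
    MeasurableEmbedding (P *ᵥ · : (ι → ℝ) → ι → ℝ) :=
  ((Matrix.toLin' P).equivOfDetNeZero (by rwa [LinearMap.det_toLin'])).toContinuousLinearEquiv
    |>.toHomeomorph.measurableEmbedding

variable {E : Type*} [NormedAddCommGroup E]

theorem integral_comp_mulVec [NormedSpace ℝ E] (hP : P.det ≠ 0) (f : (ι → ℝ) → E) :
    ∫ x, f (P *ᵥ x) = |P.det|⁻¹ • ∫ y, f y := by
  rw [← (measurableEmbedding_mulVec hP).integral_map, map_mulVec_volume hP,
    integral_smul_measure, ENNReal.toReal_ofReal (by positivity)]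

theorem integrable_comp_mulVec_iff (hP : P.det ≠ 0) {f : (ι → ℝ) → E} :
    Integrable (fun x ↦ f (P *ᵥ x)) ↔ Integrable f := by
  rw [← Function.comp_def, ← (measurableEmbedding_mulVec hP).integrable_map_iff,
    map_mulVec_volume hP, integrable_smul_measure (by simpa using hP) ENNReal.ofReal_ne_top]

end ChangeOfVariables

section QuadForm

variable [Fintype ι]

noncomputable def quadForm (N : Matrix ι ι ℂ) (x : ι → ℝ) : ℂ :=
  ∑ i, ∑ j, (x i : ℂ) * N i j * (x j : ℂ)

theorem quadForm_eq_dotProduct (N : Matrix ι ι ℂ) (x : ι → ℝ) :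
    quadForm N x = (ofReal ∘ x) ⬝ᵥ N *ᵥ (ofReal ∘ x) := by
  simp [quadForm, dotProduct, mulVec, Finset.mul_sum, mul_assoc]

theorem quadForm_mulVec (N : Matrix ι ι ℂ) (P : Matrix ι ι ℝ) (x : ι → ℝ) :
    quadForm N (P *ᵥ x) = quadForm ((P.map ofReal)ᵀ * N * P.map ofReal) x := by
  have hcast : ofReal ∘ (P *ᵥ x) = P.map ofReal *ᵥ (ofReal ∘ x) :=
    funext (RingHom.map_mulVec ofRealHom P x)
  rw [quadForm_eq_dotProduct, quadForm_eq_dotProduct, hcast, ← mulVec_mulVec, ← mulVec_mulVec,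
    dotProduct_mulVec _ (P.map ofReal)ᵀ, vecMul_transpose]

@[simp] theorem quadForm_add (N N' : Matrix ι ι ℂ) (x : ι → ℝ) :
    quadForm (N + N') x = quadForm N x + quadForm N' x := by
  simp [quadForm_eq_dotProduct, add_mulVec]

@[simp] theorem quadForm_smul (c : ℂ) (N : Matrix ι ι ℂ) (x : ι → ℝ) :
    quadForm (c • N) x = c * quadForm N x := by
  simp [quadForm_eq_dotProduct, smul_mulVec]

theorem quadForm_diagonal [DecidableEq ι] (g : ι → ℂ) (x : ι → ℝ) :
    quadForm (diagonal g) x = ∑ i, g i * (x i : ℂ) ^ 2 := by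
  simp only [quadForm, diagonal_apply, mul_ite, ite_mul, mul_zero, zero_mul,
    Finset.sum_ite_eq, Finset.mem_univ, if_true]
  exact Finset.sum_congr rfl fun i _ ↦ by ring

@[fun_prop] theorem continuous_quadForm (N : Matrix ι ι ℂ) : Continuous (quadForm N) := by
  unfold quadForm
  fun_prop

end QuadForm

open scoped MatrixOrder in
theorem Matrix.PosDef.exists_transpose_mul_mul_eq_one_and_diagonal [Fintype ι] [DecidableEq ι]
    {A B : Matrix ι ι ℝ} (hB : B.PosDef) (hA : A.IsHermitian) :
    ∃ (P : Matrix ι ι ℝ) (d : ι → ℝ), Pᵀ * B * P = 1 ∧ Pᵀ * A * P = diagonal d := by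
  set C := CFC.sqrt B
  have hCC : C * C = B := CFC.sqrt_mul_sqrt_self B hB.posSemidef.nonneg
  have hC : Cᵀ = C := by
    simpa [IsHermitian] using (CFC.sqrt_nonneg B).posSemidef.1
  have hCunit : IsUnit C.det := by
    rw [isUnit_iff_ne_zero, ← mul_self_ne_zero, ← det_mul, hCC]
    exact hB.det_pos.ne'
  have hA' : (C⁻¹ * A * C⁻¹).IsHermitian := by
    simp only [IsHermitian, conjTranspose_eq_transpose_of_trivial, transpose_mul,
      transpose_nonsing_inv, hC, mul_assoc]
    rw [show Aᵀ = A by simpa [IsHermitian] using hA]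
  set U : Matrix ι ι ℝ := (hA'.eigenvectorUnitary : Matrix ι ι ℝ)
  have hUU : Uᵀ * U = 1 := by
    simpa [star_eq_conjTranspose] using Unitary.coe_star_mul_self hA'.eigenvectorUnitary
  have hspec : Uᵀ * (C⁻¹ * A * C⁻¹) * U = diagonal hA'.eigenvalues := by
    simpa [Unitary.conjStarAlgAut_star_apply, star_eq_conjTranspose] using
      hA'.conjStarAlgAut_star_eigenvectorUnitary
  refine ⟨C⁻¹ * U, hA'.eigenvalues, ?_, ?_⟩
  · calc (C⁻¹ * U)ᵀ * B * (C⁻¹ * U) = Uᵀ * (C⁻¹ * C) * (C * C⁻¹) * U := by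
          rw [transpose_mul, transpose_nonsing_inv, hC, ← hCC]; simp only [mul_assoc]
      _ = 1 := by rw [nonsing_inv_mul C hCunit, mul_nonsing_inv C hCunit, mul_one, mul_one, hUU]
  · rw [← hspec, transpose_mul, transpose_nonsing_inv, hC]
    simp only [mul_assoc]

theorem exists_transpose_mul_mul_eq_diagonal_add_I [Fintype ι] [DecidableEq ι] {N : Matrix ι ι ℂ}
    (hN : Nᵀ = N) (hpos : (N.map im).PosDef) :
    ∃ (P : Matrix ι ι ℝ) (d : ι → ℝ), P.det ≠ 0 ∧
      (P.map ofReal)ᵀ * N * P.map ofReal = diagonal fun i ↦ (d i : ℂ) + I := by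
  have hre : (N.map re).IsHermitian := by
    ext i j
    simp [← congrFun (congrFun hN i) j]
  obtain ⟨P, d, hPB, hPA⟩ := hpos.exists_transpose_mul_mul_eq_one_and_diagonal hre
  have hdet : P.det ≠ 0 := by
    intro h
    simpa [h] using congrArg det hPB
  have hsplit : N = (N.map re).map ofReal + I • (N.map im).map ofReal := by
    ext i j
    simp [mul_comm I, re_add_im]
  have hcongr : ∀ X : Matrix ι ι ℝ,
      (P.map ofReal)ᵀ * X.map ofReal * P.map ofReal = (Pᵀ * X * P).map ofReal := fun X ↦ by
    change Pᵀ.map ofRealHom * X.map ofRealHom * P.map ofRealHom = (Pᵀ * X * P).map ofRealHom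
    rw [Matrix.map_mul, Matrix.map_mul]
  refine ⟨P, d, hdet, ?_⟩
  rw [hsplit, mul_add, add_mul, Matrix.mul_smul, Matrix.smul_mul, hcongr, hcongr, hPA, hPB]
  ext i j
  by_cases h : i = j <;> simp [h, one_apply]

section GaussianIntegral

variable [Fintype ι] [DecidableEq ι]

theorem cexp_quadForm_diagonal (g : ι → ℂ) (x : ι → ℝ) :
    cexp (I / 2 * quadForm (diagonal g) x) = ∏ i, cexp (-(-(I / 2) * g i) * (x i : ℂ) ^ 2) := by
  rw [quadForm_diagonal, Finset.mul_sum, exp_sum]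
  exact Finset.prod_congr rfl fun i _ ↦ by ring_nf

theorem re_neg_I_div_two_mul_pos {z : ℂ} (hz : 0 < z.im) : 0 < (-(I / 2) * z).re := by
  simpa using hz

theorem integrable_gaussian_diagonal {g : ι → ℂ} (hg : ∀ i, 0 < (g i).im) :
    Integrable fun x : ι → ℝ ↦ cexp (I / 2 * quadForm (diagonal g) x) := by
  simp_rw [cexp_quadForm_diagonal]
  exact .fintype_prod fun i ↦ integrable_cexp_neg_mul_sq (re_neg_I_div_two_mul_pos (hg i))

theorem integral_gaussian_diagonal {g : ι → ℂ} (hg : ∀ i, 0 < (g i).im) :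
    ∫ x : ι → ℝ, cexp (I / 2 * quadForm (diagonal g) x)
      = ∏ i, (π / (-(I / 2) * g i)) ^ (1 / 2 : ℂ) := by
  simp_rw [cexp_quadForm_diagonal]
  rw [integral_fintype_prod_volume_eq_prod
    (f := fun i (t : ℝ) ↦ cexp (-(-(I / 2) * g i) * (t : ℂ) ^ 2))]
  exact Finset.prod_congr rfl fun i _ ↦ integral_gaussian_complex (re_neg_I_div_two_mul_pos (hg i))

theorem integral_gaussian_diagonal_sq_mul_det {g : ι → ℂ} (hg : ∀ i, 0 < (g i).im) :
    (∫ x : ι → ℝ, cexp (I / 2 * quadForm (diagonal g) x)) ^ 2 * (-I • diagonal g).det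
      = (2 * π) ^ Fintype.card ι := by
  have hfactor : ∀ i, ((π / (-(I / 2) * g i)) ^ (1 / 2 : ℂ)) ^ 2 * (-I * g i) = 2 * π := by
    intro i
    have hg0 : g i ≠ 0 := fun h ↦ by simpa [h] using hg i
    have hsqrt := cpow_nat_inv_pow (π / (-(I / 2) * g i)) two_ne_zero
    rw [Nat.cast_ofNat, ← one_div] at hsqrt
    rw [hsqrt]
    field_simp
  rw [integral_gaussian_diagonal hg, ← Finset.prod_pow, ← diagonal_smul, det_diagonal,
    ← Finset.prod_mul_distrib]
  simp only [Pi.smul_apply, smul_eq_mul]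
  rw [Finset.prod_congr rfl fun i _ ↦ hfactor i, Finset.prod_const, Finset.card_univ]

theorem integral_gaussian_I_smul_one :
    ∫ x : ι → ℝ, cexp (I / 2 * quadForm (I • 1) x)
      = ((2 * π) ^ (Fintype.card ι / 2 : ℝ) : ℝ) := by
  rw [← diagonal_one, ← diagonal_smul, integral_gaussian_diagonal (by simp)]
  have hfactor : (π / (-(I / 2) * I)) ^ (1 / 2 : ℂ) = ((2 * π) ^ (1 / 2 : ℝ) : ℝ) := by
    rw [ofReal_cpow (by positivity)]
    congr 1
    · field_simp
      rw [I_sq]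
      push_cast
      ring
    · push_cast; ring
  simp only [Pi.smul_apply, smul_eq_mul, mul_one, hfactor, Finset.prod_const, Finset.card_univ]
  rw [← ofReal_pow, ← Real.rpow_mul_natCast (by positivity)]
  congr 2
  ring

theorem integrable_gaussian {N : Matrix ι ι ℂ} (hN : Nᵀ = N) (hpos : (N.map im).PosDef) :
    Integrable fun x : ι → ℝ ↦ cexp (I / 2 * quadForm N x) := by
  obtain ⟨P, d, hP, hPN⟩ := exists_transpose_mul_mul_eq_diagonal_add_I hN hpos
  rw [← integrable_comp_mulVec_iff hP]
  simp_rw [quadForm_mulVec, hPN]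
  exact integrable_gaussian_diagonal fun i ↦ by simp

theorem integral_gaussian_sq_mul_det {N : Matrix ι ι ℂ} (hN : Nᵀ = N) (hpos : (N.map im).PosDef) :
    (∫ x : ι → ℝ, cexp (I / 2 * quadForm N x)) ^ 2 * (-I • N).det
      = (2 * π) ^ Fintype.card ι := by
  obtain ⟨P, d, hP, hPN⟩ := exists_transpose_mul_mul_eq_diagonal_add_I hN hpos
  have hint := integral_comp_mulVec hP fun x ↦ cexp (I / 2 * quadForm N x)
  simp_rw [quadForm_mulVec, hPN] at hint
  have hdet : (-I • diagonal fun i ↦ (d i : ℂ) + I).det = (P.det : ℂ) ^ 2 * (-I • N).det := by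
    have hPdet : (P.map ofReal).det = P.det := (RingHom.map_det ofRealHom P).symm
    rw [← hPN, det_smul, det_smul, det_mul, det_mul, det_transpose, hPdet]
    ring
  rw [← integral_gaussian_diagonal_sq_mul_det (g := fun i ↦ (d i : ℂ) + I) (fun i ↦ by simp),
    hint, hdet, real_smul, mul_pow, ← ofReal_pow, inv_pow, sq_abs]
  have hP' : (P.det : ℂ) ≠ 0 := by exact_mod_cast hP
  push_cast
  field_simp

end GaussianIntegral

section Homotopy

theorem norm_cexp_convexComb_le {z w : ℂ} {s : ℝ} (hs : s ∈ Icc 0 1) :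
    ‖cexp (s * z + (1 - s) * w)‖ ≤ ‖cexp z‖ + ‖cexp w‖ := by
  have hre : (s * z + (1 - s) * w).re = s * z.re + (1 - s) * w.re := by simp
  rw [norm_exp, norm_exp, norm_exp, hre]
  calc Real.exp (s * z.re + (1 - s) * w.re)
      ≤ s * Real.exp z.re + (1 - s) * Real.exp w.re :=
        convexOn_exp.2 (mem_univ _) (mem_univ _) hs.1 (sub_nonneg.2 hs.2) (by ring)
    _ ≤ Real.exp z.re + Real.exp w.re := by
        nlinarith [Real.exp_pos z.re, Real.exp_pos w.re, hs.1, hs.2]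

theorem continuousOn_integral_cexp_convexComb {α : Type*} [MeasurableSpace α] {μ : Measure α}
    {a b : α → ℂ} (ha : AEStronglyMeasurable a μ) (hb : AEStronglyMeasurable b μ)
    (hia : Integrable (fun x ↦ cexp (a x)) μ) (hib : Integrable (fun x ↦ cexp (b x)) μ) :
    ContinuousOn (fun s : ℝ ↦ ∫ x, cexp (s * a x + (1 - s) * b x) ∂μ) (Icc 0 1) :=
  continuousOn_of_dominated (bound := fun x ↦ ‖cexp (a x)‖ + ‖cexp (b x)‖)
    (fun _ _ ↦ by fun_prop) (fun _ hs ↦ ae_of_all _ fun _ ↦ norm_cexp_convexComb_le hs)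
    (hia.norm.add hib.norm) (ae_of_all _ fun _ ↦ by fun_prop)

theorem Matrix.PosDef.smul_add_one_sub_smul {A B : Matrix ι ι ℝ} (hA : A.PosDef) (hB : B.PosDef)
    {s : ℝ} (hs : s ∈ Icc 0 1) : (s • A + (1 - s) • B).PosDef := by
  rcases hs.1.eq_or_lt with rfl | hs0
  · simpa using hB
  · exact (hA.smul hs0).add_posSemidef (hB.posSemidef.smul (sub_nonneg.2 hs.2))

variable [DecidableEq ι]

def pathToI (M : Matrix ι ι ℂ) (s : ℝ) : Matrix ι ι ℂ :=
  (s : ℂ) • M + ((1 : ℂ) - (s : ℂ)) • (I • (1 : Matrix ι ι ℂ))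

@[simp] theorem pathToI_zero (M : Matrix ι ι ℂ) : pathToI M 0 = I • 1 := by
  simp [pathToI]

@[simp] theorem pathToI_one (M : Matrix ι ι ℂ) : pathToI M 1 = M := by
  simp [pathToI]

theorem transpose_pathToI {M : Matrix ι ι ℂ} (hM : Mᵀ = M) (s : ℝ) :
    (pathToI M s)ᵀ = pathToI M s := by
  simp [pathToI, hM]

theorem map_im_pathToI (M : Matrix ι ι ℂ) (s : ℝ) :
    (pathToI M s).map im = s • M.map im + (1 - s) • 1 := by
  ext i j
  by_cases h : i = j <;> simp [pathToI, h, one_apply]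

variable [Fintype ι]

theorem quadForm_pathToI (M : Matrix ι ι ℂ) (s : ℝ) (x : ι → ℝ) :
    quadForm (pathToI M s) x = s * quadForm M x + (1 - s) * quadForm (I • 1) x := by
  simp only [pathToI, quadForm_add, quadForm_smul]

theorem continuousOn_integral_gaussian_pathToI {M : Matrix ι ι ℂ} (hM : Mᵀ = M)
    (hpos : (M.map im).PosDef) :
    ContinuousOn (fun s ↦ ∫ x : ι → ℝ, cexp (I / 2 * quadForm (pathToI M s) x)) (Icc 0 1) := by
  have hI : (I • 1 : Matrix ι ι ℂ)ᵀ = I • 1 := by simp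
  have hIpos : ((I • 1 : Matrix ι ι ℂ).map im).PosDef := by
    have h1 : (I • 1 : Matrix ι ι ℂ).map im = 1 := by
      ext i j
      by_cases h : i = j <;> simp [h, one_apply]
    exact h1 ▸ PosDef.one
  simp_rw [quadForm_pathToI, mul_add, mul_left_comm (I / 2)]
  exact continuousOn_integral_cexp_convexComb
    (by fun_prop) (by fun_prop) (integrable_gaussian hM hpos) (integrable_gaussian hI hIpos)

end Homotopy

/-- Gaussian integral with positive-definite imaginary part: if M is complex
symmetric with Im M positive definite, then
∫_{ℝⁿ} exp((i/2) x·Mx) dx = (2π)^{n/2} (det(-iM))^{-1/2}, where the square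
root is the branch continuous along the path M_s = sM + (1-s)iI, equal to
the positive root 1 at M₀ = iI. -/
theorem stmt_14 (n : ℕ) (M : Matrix (Fin n) (Fin n) ℂ)
    (hsym : Mᵀ = M)
    (ImM : Matrix (Fin n) (Fin n) ℝ)
    (hImM : ∀ i j, ImM i j = (M i j).im)
    (hpos : ImM.PosDef)
    (r : ℝ → ℂ)
    (hr : ContinuousOn r (Set.Icc 0 1))
    (hr2 : ∀ s ∈ Set.Icc (0 : ℝ) 1,
      r s ^ 2 =
        (-(Complex.I) • ((s : ℂ) • M +
          ((1 : ℂ) - (s : ℂ)) • (Complex.I • (1 : Matrix (Fin n) (Fin n) ℂ)))).det)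
    (hr0 : r 0 = 1) :
    ∫ x : Fin n → ℝ,
        Complex.exp ((Complex.I / 2) * ∑ i, ∑ j, (x i : ℂ) * M i j * (x j : ℂ))
      = (((2 * Real.pi) ^ ((n : ℝ) / 2) : ℝ) : ℂ) * (r 1)⁻¹ := by
  have hMpos : (M.map im).PosDef := by
    convert hpos
    ext i j
    exact (hImM i j).symm
  set F : ℝ → ℂ := fun s ↦ ∫ x : Fin n → ℝ, cexp (I / 2 * quadForm (pathToI M s) x)
  set c : ℂ := (((2 * π) ^ ((n : ℝ) / 2) : ℝ) : ℂ)
  have hc : c ≠ 0 := by simp only [c, ofReal_ne_zero]; positivity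
  have hc2 : c ^ 2 = (2 * π) ^ n := by
    rw [← ofReal_pow, ← Real.rpow_mul_natCast (by positivity)]
    norm_num
  have hsq : EqOn ((fun s ↦ F s * r s) ^ 2) ((fun _ ↦ c) ^ 2) (Icc 0 1) := fun s hs ↦ by
    have hF := integral_gaussian_sq_mul_det (transpose_pathToI hsym s)
      (map_im_pathToI M s ▸ hMpos.smul_add_one_sub_smul PosDef.one hs)
    rw [Fintype.card_fin, ← hc2] at hF
    simp only [Pi.pow_apply, mul_pow, hr2 s hs]
    exact hF
  have hF0 : F 0 = c := by
    simp only [F, pathToI_zero, integral_gaussian_I_smul_one, Fintype.card_fin, c]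
  have hFr : F 1 * r 1 = c :=
    isPreconnected_Icc.eq_of_sq_eq ((continuousOn_integral_gaussian_pathToI hsym hMpos).mul hr)
      continuousOn_const hsq (fun _ ↦ hc) (left_mem_Icc.2 zero_le_one)
      (show F 0 * r 0 = c by rw [hF0, hr0, mul_one]) (right_mem_Icc.2 zero_le_one)
  have hr1 : r 1 ≠ 0 := fun h ↦ hc (by simpa [h] using hFr.symm)
  calc _ = F 1 := by rw [← pathToI_one M]; rfl
    _ = c * (r 1)⁻¹ := (eq_mul_inv_iff_mul_eq₀ hr1).2 hFr
end
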